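/- arXiv:1106.0380 — 2 statements merged into one kernel-verified Lean document; each statement's English description precedes it below -/
import Mathlib

section
/- Consider the example channel: 𝒳1 = 𝒳2 = {0,1}, state W = (W0,W1) where W0, W1 are i.i.d. binary random variables each of Shannon entropy 1/2 bit, and output Y = (Y1,Y2) with Y1 = X1 ⊕ W_{X2} (mod-2 addition, where W_{X2} equals W0 if X2 = 0 and W1 if X2 = 1) and Y2 = X2. Let (U,V,X1,X2,W,Y) be finitely supported random variables whose joint pmf factors as P_U(u)·P_{X1|U}(x1|u)·P_{X2|U}(x2|u)·P_W(w)·P_{V|W}(v|w)·P_{Y|W,X1,X2}(y|w,x1,x2), where P_{Y|W,X1,X2} is the channel law just described. If R1 = 1 and R2 ≥ 0 satisfy R1 ≤ I(X1;Y|X2,U,V), R2 ≤ I(X2;Y|X1,U,V), R1+R2 ≤ I(X1,X2;Y|U,V), and R1+R2 ≤ I(X1,X2,V;Y) − I(V;W), then R2 = 0. -/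
attribute [local instance] Classical.propDecidable

/-- The distribution (pmf) of a random variable `X` on the finite sample space `Ω`
equipped with the pmf `p`. -/
noncomputable def distOf {Ω α : Type*} [Fintype Ω] (p : Ω → ℝ) (X : Ω → α) (a : α) : ℝ :=
  ∑ ω, if X ω = a then p ω else 0

/-- `p` is a probability mass function. -/
def IsPMF {Ω : Type*} [Fintype Ω] (p : Ω → ℝ) : Prop :=
  (∀ ω, 0 ≤ p ω) ∧ ∑ ω, p ω = 1

/-- Shannon entropy (in bits) of the random variable `X`. -/
noncomputable def ent {Ω α : Type*} [Fintype Ω] [Fintype α] (p : Ω → ℝ) (X : Ω → α) : ℝ :=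
  ∑ a : α, -(distOf p X a * Real.logb 2 (distOf p X a))

/-- Conditional entropy `H(X|Y)` in bits. -/
noncomputable def condEnt {Ω α β : Type*} [Fintype Ω] [Fintype α] [Fintype β]
    (p : Ω → ℝ) (X : Ω → α) (Y : Ω → β) : ℝ :=
  ent p (fun ω => (X ω, Y ω)) - ent p Y

/-- Mutual information `I(X;Y)` in bits. -/
noncomputable def mi {Ω α β : Type*} [Fintype Ω] [Fintype α] [Fintype β]
    (p : Ω → ℝ) (X : Ω → α) (Y : Ω → β) : ℝ :=
  ent p X + ent p Y - ent p (fun ω => (X ω, Y ω))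

/-- Conditional mutual information `I(X;Y|Z)` in bits. -/
noncomputable def cmi {Ω α β γ : Type*} [Fintype Ω] [Fintype α] [Fintype β] [Fintype γ]
    (p : Ω → ℝ) (X : Ω → α) (Y : Ω → β) (Z : Ω → γ) : ℝ :=
  ent p (fun ω => (X ω, Z ω)) + ent p (fun ω => (Y ω, Z ω))
    - ent p (fun ω => (X ω, Y ω, Z ω)) - ent p Z

/-- `sel w x2` is `W_{x2}`: the first component of `w` if `x2 = 0`, else the second. -/
def sel (w : Fin 2 × Fin 2) (x2 : Fin 2) : Fin 2 := if x2 = 0 then w.1 else w.2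

/-- The channel law of the example channel: `Y = (X1 ⊕ W_{X2}, X2)`. -/
noncomputable def exChan (y : Fin 2 × Fin 2) (w : Fin 2 × Fin 2) (x1 x2 : Fin 2) : ℝ :=
  if y.1 = x1 + sel w x2 ∧ y.2 = x2 then 1 else 0

/-!
Write `T = W_{X2}`, so that `Y = (X1 + T, X2)` almost surely. As `Y1` is a single bit,
`I(X1;Y|X2,U,V) ≤ 1 - H(T|X1,X2,U,V)`, so `R1 = 1` forces `H(T|U,X1,X2,V) = 0`. The inputs
`(U,X1,X2)` are independent of `(W,V)`, hence this conditional entropy is the average over the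
inputs of `H(W_{x2}|V)`, and `H(W_b|V) = 0` for every `b` with `P(X2 = b) > 0`.
On the other hand `R2 ≤ I(X2;Y|X1,U,V) ≤ H(X2)`, and the last constraint together with
`H(Y) ≤ 2` and `H(W) = 1` gives `R2 ≤ H(W|V) ≤ H(W0|V) + H(W1|V)`. If `R2 > 0`, then `X2` is not
almost surely constant, so both terms vanish, a contradiction.
-/

open Finset Real

section Distributions

variable {Ω α β γ : Type*} [Fintype Ω] {p : Ω → ℝ}

lemma distOf_nonneg (hp : IsPMF p) (X : Ω → α) (a : α) : 0 ≤ distOf p X a :=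
  sum_nonneg fun ω _ => by split_ifs <;> simp [hp.1 ω]

lemma sum_distOf_mul [Fintype α] (X : Ω → α) (φ : α → ℝ) :
    ∑ a, distOf p X a * φ a = ∑ ω, p ω * φ (X ω) := by
  simp only [distOf, sum_mul, ite_mul, zero_mul]
  rw [sum_comm]
  simp

lemma sum_distOf [Fintype α] (hp : IsPMF p) (X : Ω → α) : ∑ a, distOf p X a = 1 := by
  simpa [hp.2] using sum_distOf_mul (p := p) X fun _ => 1

lemma sum_distOf_mul_comp [Fintype α] [Fintype β] (X : Ω → α) (f : α → β) (φ : β → ℝ) :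
    ∑ a, distOf p X a * φ (f a) = ∑ b, distOf p (fun ω => f (X ω)) b * φ b := by
  rw [sum_distOf_mul, sum_distOf_mul]

lemma distOf_comp [Fintype α] (X : Ω → α) (f : α → β) (b : β) :
    distOf p (fun ω => f (X ω)) b = ∑ a with f a = b, distOf p X a := by
  simp only [distOf]
  rw [sum_comm]
  simp

lemma distOf_comp_of_injective (X : Ω → α) {f : α → β} (hf : f.Injective) (a : α) :
    distOf p (fun ω => f (X ω)) (f a) = distOf p X a := by
  simp only [distOf, hf.eq_iff]

lemma distOf_fst_eq_sum [Fintype β] (A : Ω → α) (B : Ω → β) (a : α) :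
    distOf p A a = ∑ b, distOf p (fun ω => (A ω, B ω)) (a, b) := by
  simp only [distOf]
  rw [sum_comm]
  refine sum_congr rfl fun ω _ => ?_
  by_cases h : A ω = a <;> simp [h, Prod.ext_iff]

lemma distOf_snd_eq_sum [Fintype α] (A : Ω → α) (B : Ω → β) (b : β) :
    distOf p B b = ∑ a, distOf p (fun ω => (A ω, B ω)) (a, b) := by
  simp only [distOf]
  rw [sum_comm]
  refine sum_congr rfl fun ω _ => ?_
  by_cases h : B ω = b <;> simp [h, Prod.ext_iff]

lemma le_distOf (hp : IsPMF p) (X : Ω → α) (ω : Ω) : p ω ≤ distOf p X (X ω) :=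
  calc p ω = if X ω = X ω then p ω else 0 := (if_pos rfl).symm
    _ ≤ distOf p X (X ω) := single_le_sum (f := fun ω' => if X ω' = X ω then p ω' else 0)
        (fun ω' _ => by split_ifs <;> simp [hp.1 ω']) (mem_univ ω)

lemma distOf_le_distOf_comp (hp : IsPMF p) (X : Ω → α) (f : α → β) (a : α) :
    distOf p X a ≤ distOf p (fun ω => f (X ω)) (f a) :=
  sum_le_sum fun ω _ => by split_ifs <;> simp_all [hp.1 ω]

lemma distOf_congr_ae {X X' : Ω → α} (h : ∀ ω, p ω ≠ 0 → X ω = X' ω) :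
    distOf p X = distOf p X' := by
  funext a
  refine sum_congr rfl fun ω _ => ?_
  by_cases hω : p ω = 0
  · simp [hω]
  · rw [h ω hω]

lemma distOf_fst_eq_of_eq_mul [Fintype β] {A : Ω → α} {B : Ω → β} {f : α → ℝ} {g : β → ℝ}
    (h : ∀ a b, distOf p (fun ω => (A ω, B ω)) (a, b) = f a * g b) (hg : ∑ b, g b = 1) (a : α) :
    distOf p A a = f a := by
  rw [distOf_fst_eq_sum A B]
  simp [h, ← mul_sum, hg]

lemma distOf_snd_eq_of_eq_mul [Fintype α] {A : Ω → α} {B : Ω → β} {f : α → ℝ} {g : β → ℝ}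
    (h : ∀ a b, distOf p (fun ω => (A ω, B ω)) (a, b) = f a * g b) (hf : ∑ a, f a = 1) (b : β) :
    distOf p B b = g b := by
  rw [distOf_snd_eq_sum A B]
  simp [h, ← sum_mul, hf]

lemma distOf_pair_comp_of_indep [Fintype α] [Fintype β] {A : Ω → α} {B : Ω → β}
    (hind : ∀ a b, distOf p (fun ω => (A ω, B ω)) (a, b) = distOf p A a * distOf p B b)
    (K : α → β → γ) (a : α) (c : γ) :
    distOf p (fun ω => (A ω, K (A ω) (B ω))) (a, c)
      = distOf p A a * distOf p (fun ω => K a (B ω)) c := by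
  rw [distOf_comp (fun ω => (A ω, B ω)) (fun x => (x.1, K x.1 x.2)), distOf_comp B, mul_sum]
  simp [sum_filter, Fintype.sum_prod_type, hind, Prod.ext_iff, ite_and]

lemma eq_zero_of_sum_distOf_mul_nonpos [Fintype α] (hp : IsPMF p) {X : Ω → α} {φ : α → ℝ}
    (hφ : ∀ a, 0 ≤ φ a) (h : ∑ a, distOf p X a * φ a ≤ 0) {ω : Ω} (hω : p ω ≠ 0) :
    φ (X ω) = 0 := by
  rw [sum_distOf_mul] at h
  have := (sum_eq_zero_iff_of_nonneg fun ω _ => mul_nonneg (hp.1 ω) (hφ (X ω))).1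
    (h.antisymm (sum_nonneg fun ω _ => mul_nonneg (hp.1 ω) (hφ (X ω)))) ω (mem_univ ω)
  exact (mul_eq_zero.1 this).resolve_left hω

end Distributions

lemma negMulLog_sum_le {ι : Type*} (s : Finset ι) (x : ι → ℝ) (hx : ∀ i ∈ s, 0 ≤ x i) :
    negMulLog (∑ i ∈ s, x i) ≤ ∑ i ∈ s, negMulLog (x i) := by
  rw [negMulLog, neg_mul, sum_mul, ← sum_neg_distrib]
  refine sum_le_sum fun i hi => ?_
  rcases (hx i hi).eq_or_lt with h0 | h0
  · simp [← h0]
  · have := log_le_log h0 (single_le_sum hx hi)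
    rw [negMulLog]
    nlinarith

lemma negMulLog_le_sub_sub_mul_log {x y : ℝ} (hx : 0 ≤ x) (hy : 0 ≤ y) (hxy : x ≠ 0 → 0 < y) :
    negMulLog x ≤ y - x - x * log y := by
  rcases hx.eq_or_lt with rfl | hx
  · simpa using hy
  · have hy := hxy hx.ne'
    have := mul_le_mul_of_nonneg_left (log_le_sub_one_of_pos (div_pos hy hx)) hx.le
    rw [log_div hy.ne' hx.ne', mul_sub_one, mul_div_cancel₀ _ hx.ne'] at this
    rw [negMulLog]
    linarith

lemma sum_negMulLog_le_neg_sum_mul_log {ι : Type*} [Fintype ι] {P Q : ι → ℝ}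
    (hP : ∀ i, 0 ≤ P i) (hQ : ∀ i, 0 ≤ Q i) (hPQ : ∀ i, P i ≠ 0 → 0 < Q i)
    (hsum : ∑ i, Q i ≤ ∑ i, P i) :
    ∑ i, negMulLog (P i) ≤ -∑ i, P i * log (Q i) := by
  have := sum_le_sum fun i (_ : i ∈ univ) => negMulLog_le_sub_sub_mul_log (hP i) (hQ i) (hPQ i)
  simp only [sum_sub_distrib] at this
  linarith

lemma sum_negMulLog_mul {α β : Type*} [Fintype α] [Fintype β] (P : α → ℝ) (Q : α → β → ℝ)
    (hQ : ∀ a, ∑ b, Q a b = 1) :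
    ∑ a, ∑ b, negMulLog (P a * Q a b)
      = ∑ a, negMulLog (P a) + ∑ a, P a * ∑ b, negMulLog (Q a b) := by
  simp only [negMulLog_mul, sum_add_distrib, ← sum_mul, ← mul_sum, hQ, one_mul]

section Entropy

variable {Ω α β γ δ : Type*} [Fintype Ω] {p : Ω → ℝ}

lemma neg_mul_logb_two (x : ℝ) : -(x * logb 2 x) = negMulLog x / log 2 := by
  rw [negMulLog, logb]; ring

lemma ent_eq_sum_negMulLog [Fintype α] (X : Ω → α) :
    ent p X = (∑ a, negMulLog (distOf p X a)) / log 2 := by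
  simp only [ent, neg_mul_logb_two, sum_div]

lemma sum_negMulLog_distOf_comp [Fintype α] [Fintype β] (X : Ω → α) (f : α → β) :
    ∑ b, negMulLog (distOf p (fun ω => f (X ω)) b)
      = -∑ a, distOf p X a * log (distOf p (fun ω => f (X ω)) (f a)) := by
  rw [sum_distOf_mul_comp X f fun b => log (distOf p (fun ω => f (X ω)) b), ← sum_neg_distrib]
  simp only [negMulLog, neg_mul]

lemma ent_congr_ae [Fintype α] {X X' : Ω → α} (h : ∀ ω, p ω ≠ 0 → X ω = X' ω) :
    ent p X = ent p X' := by
  simp only [ent, distOf_congr_ae h]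

lemma ent_comp_le [Fintype α] [Fintype β] (hp : IsPMF p) (X : Ω → α) (f : α → β) :
    ent p (fun ω => f (X ω)) ≤ ent p X := by
  rw [ent_eq_sum_negMulLog, ent_eq_sum_negMulLog]
  gcongr
  calc ∑ b, negMulLog (distOf p (fun ω => f (X ω)) b)
      ≤ ∑ b, ∑ a with f a = b, negMulLog (distOf p X a) := by
        gcongr with b
        rw [distOf_comp]
        exact negMulLog_sum_le _ _ fun a _ => distOf_nonneg hp X a
    _ = ∑ a, negMulLog (distOf p X a) := sum_fiberwise _ _ _

lemma ent_le_of_ae_eq_comp [Fintype α] [Fintype β] (hp : IsPMF p) {A : Ω → α} {B : Ω → β}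
    (f : α → β) (h : ∀ ω, p ω ≠ 0 → B ω = f (A ω)) : ent p B ≤ ent p A :=
  (ent_congr_ae h).trans_le (ent_comp_le hp A f)

lemma ent_eq_of_ae_eq_comp [Fintype α] [Fintype β] (hp : IsPMF p) {A : Ω → α} {B : Ω → β}
    (f : α → β) (g : β → α) (hB : ∀ ω, p ω ≠ 0 → B ω = f (A ω))
    (hA : ∀ ω, p ω ≠ 0 → A ω = g (B ω)) : ent p A = ent p B :=
  le_antisymm (ent_le_of_ae_eq_comp hp g hA) (ent_le_of_ae_eq_comp hp f hB)

lemma ent_pair_comm [Fintype α] [Fintype β] (hp : IsPMF p) (A : Ω → α) (B : Ω → β) :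
    ent p (fun ω => (A ω, B ω)) = ent p (fun ω => (B ω, A ω)) :=
  ent_eq_of_ae_eq_comp hp Prod.swap Prod.swap (fun _ _ => rfl) (fun _ _ => rfl)

lemma ent_le_pair [Fintype α] [Fintype β] (hp : IsPMF p) (A : Ω → α) (B : Ω → β) :
    ent p B ≤ ent p (fun ω => (A ω, B ω)) :=
  ent_le_of_ae_eq_comp hp Prod.snd fun _ _ => rfl

lemma ent_eq_zero_of_ae_eq_const [Fintype α] (hp : IsPMF p) {X : Ω → α} (a : α)
    (h : ∀ ω, p ω ≠ 0 → X ω = a) : ent p X = 0 := by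
  rw [ent_congr_ae h]
  simp [ent_eq_sum_negMulLog, distOf, hp.2, apply_ite]

lemma exists_ne_of_ent_ne_zero [Fintype α] (hp : IsPMF p) {X : Ω → α} (h : ent p X ≠ 0)
    (a : α) : ∃ ω, p ω ≠ 0 ∧ X ω ≠ a := by
  by_contra! hX
  exact h (ent_eq_zero_of_ae_eq_const hp a hX)

lemma ent_le_logb_card [Fintype α] [Nonempty α] (hp : IsPMF p) (X : Ω → α) :
    ent p X ≤ logb 2 (Fintype.card α) := by
  have hn : (0 : ℝ) < Fintype.card α := by exact_mod_cast Fintype.card_pos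
  have := concaveOn_negMulLog.le_map_sum (t := univ) (w := fun _ => (Fintype.card α : ℝ)⁻¹)
    (p := distOf p X) (fun _ _ => by positivity) (by simp [hn.ne'])
    (fun a _ => Set.mem_Ici.2 (distOf_nonneg hp X a))
  simp only [smul_eq_mul, ← mul_sum, sum_distOf hp, mul_one] at this
  rw [show negMulLog (Fintype.card α : ℝ)⁻¹ = (Fintype.card α : ℝ)⁻¹ * log (Fintype.card α) by
    simp [negMulLog, log_inv]] at this
  rw [ent_eq_sum_negMulLog, logb]
  gcongr
  exact le_of_mul_le_mul_left this (inv_pos.2 hn)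

lemma sum_distOf_mul_distOf_div_distOf [Fintype α] [Fintype β] [Fintype γ] (hp : IsPMF p)
    (A : Ω → α) (B : Ω → β) (C : Ω → γ) :
    ∑ x : α × β × γ, distOf p (fun ω => (A ω, C ω)) (x.1, x.2.2)
      * distOf p (fun ω => (B ω, C ω)) (x.2.1, x.2.2) / distOf p C x.2.2 = 1 :=
  calc _ = ∑ c, (∑ a, distOf p (fun ω => (A ω, C ω)) (a, c))
        * (∑ b, distOf p (fun ω => (B ω, C ω)) (b, c)) / distOf p C c := by
        simp only [Fintype.sum_prod_type_right, Finset.sum_mul_sum, sum_div]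
        exact sum_congr rfl fun c _ => sum_comm
    _ = ∑ c, distOf p C c := by simp only [← distOf_snd_eq_sum, mul_self_div_self]
    _ = 1 := sum_distOf hp C

lemma ent_submod [Fintype α] [Fintype β] [Fintype γ] (hp : IsPMF p)
    (A : Ω → α) (B : Ω → β) (C : Ω → γ) :
    ent p (fun ω => (A ω, B ω, C ω)) + ent p C
      ≤ ent p (fun ω => (A ω, C ω)) + ent p (fun ω => (B ω, C ω)) := by
  let X : Ω → α × β × γ := fun ω => (A ω, B ω, C ω)
  simp only [ent_eq_sum_negMulLog, ← add_div]
  gcongr ?_ / _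
  rw [sum_negMulLog_distOf_comp X (fun x => (x.1, x.2.2)),
    sum_negMulLog_distOf_comp X (fun x => (x.2.1, x.2.2)),
    sum_negMulLog_distOf_comp X (fun x => x.2.2)]
  dsimp only [X]
  have hQ_sum := sum_distOf_mul_distOf_div_distOf hp A B C
  set P := distOf p X
  set PA := distOf p (fun ω => (A ω, C ω))
  set PB := distOf p (fun ω => (B ω, C ω))
  set PC := distOf p C
  have hP (x) : 0 ≤ P x := distOf_nonneg hp X x
  have hpos (x) (h : 0 < P x) : 0 < PA (x.1, x.2.2) ∧ 0 < PB (x.2.1, x.2.2) ∧ 0 < PC x.2.2 :=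
    have hA := h.trans_le (distOf_le_distOf_comp hp X (fun x => (x.1, x.2.2)) x)
    ⟨hA, h.trans_le (distOf_le_distOf_comp hp X (fun x => (x.2.1, x.2.2)) x),
      hA.trans_le (distOf_le_distOf_comp hp (fun ω => (A ω, C ω)) Prod.snd _)⟩
  -- Gibbs' inequality against the law making `A` and `B` conditionally independent given `C`
  set Q : α × β × γ → ℝ := fun x => PA (x.1, x.2.2) * PB (x.2.1, x.2.2) / PC x.2.2
  have hQ (x) : 0 ≤ Q x := by
    have := distOf_nonneg hp (fun ω => (A ω, C ω)) (x.1, x.2.2)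
    have := distOf_nonneg hp (fun ω => (B ω, C ω)) (x.2.1, x.2.2)
    have := distOf_nonneg hp C x.2.2
    positivity
  have hlogQ (x) : P x * log (Q x) = P x * log (PA (x.1, x.2.2)) + P x * log (PB (x.2.1, x.2.2))
      - P x * log (PC x.2.2) := by
    rcases (hP x).eq_or_lt with h0 | h0
    · simp [← h0]
    · obtain ⟨h1, h2, h3⟩ := hpos x h0
      rw [log_div (by positivity) h3.ne', log_mul h1.ne' h2.ne']
      ring
  have hgibbs := sum_negMulLog_le_neg_sum_mul_log hP hQ
    (fun x h => have h' := hpos x ((hP x).lt_of_ne' h); div_pos (mul_pos h'.1 h'.2.1) h'.2.2)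
    (by rw [hQ_sum, sum_distOf hp X])
  simp only [hlogQ, sum_add_distrib, sum_sub_distrib] at hgibbs
  linarith

lemma ent_pair_le [Fintype α] [Fintype β] (hp : IsPMF p) (A : Ω → α) (B : Ω → β) :
    ent p (fun ω => (A ω, B ω)) ≤ ent p A + ent p B := by
  have h := ent_submod hp A B fun _ => ()
  rwa [ent_eq_of_ae_eq_comp hp (fun x => (x.1, x.2.1)) (fun x => (x.1, x.2, ())) (fun _ _ => rfl)
      (fun _ _ => rfl),
    ent_eq_of_ae_eq_comp hp (fun x => x.1) (fun a => (a, ())) (fun _ _ => rfl) (fun _ _ => rfl),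
    ent_eq_of_ae_eq_comp hp (fun x => x.1) (fun b => (b, ())) (fun _ _ => rfl) (fun _ _ => rfl),
    ent_eq_zero_of_ae_eq_const hp () (fun _ _ => rfl), add_zero] at h

lemma ent_pair_eq_add_sum [Fintype α] [Fintype β] (hp : IsPMF p) (A : Ω → α) (B : Ω → β)
    (Bs : α → Ω → β)
    (h : ∀ a b, distOf p (fun ω => (A ω, B ω)) (a, b) = distOf p A a * distOf p (Bs a) b) :
    ent p (fun ω => (A ω, B ω)) = ent p A + ∑ a, distOf p A a * ent p (Bs a) := by
  simp only [ent_eq_sum_negMulLog, Fintype.sum_prod_type, h,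
    sum_negMulLog_mul _ _ fun a => sum_distOf hp (Bs a), add_div, sum_div, mul_div_assoc]

lemma ent_eq_two_mul_of_distOf_eq [Fintype α] {W : Ω → α × α} {q : α → ℝ} (hq : ∑ b, q b = 1)
    (hW : ∀ w, distOf p W w = q w.1 * q w.2) :
    ent p W = 2 * ∑ b, -(q b * logb 2 (q b)) := by
  simp only [ent_eq_sum_negMulLog, hW, Fintype.sum_prod_type,
    sum_negMulLog_mul q (fun _ => q) fun _ => hq, ← sum_mul, hq, neg_mul_logb_two, ← sum_div]
  ring

lemma condEnt_nonneg [Fintype α] [Fintype β] (hp : IsPMF p) (A : Ω → α) (B : Ω → β) :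
    0 ≤ condEnt p A B :=
  sub_nonneg.2 (ent_le_pair hp A B)

lemma condEnt_congr_right [Fintype α] [Fintype β] [Fintype γ] (hp : IsPMF p) {T : Ω → α}
    {C : Ω → β} {C' : Ω → γ} (f : β → γ) (g : γ → β) (hC' : ∀ ω, p ω ≠ 0 → C' ω = f (C ω))
    (hC : ∀ ω, p ω ≠ 0 → C ω = g (C' ω)) :
    condEnt p T C = condEnt p T C' := by
  have hTC : ent p (fun ω => (T ω, C ω)) = ent p (fun ω => (T ω, C' ω)) :=
    ent_eq_of_ae_eq_comp hp (fun x => (x.1, f x.2)) (fun x => (x.1, g x.2))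
      (fun ω hω => by rw [hC' ω hω]) (fun ω hω => by rw [hC ω hω])
  rw [condEnt, condEnt, hTC, ent_eq_of_ae_eq_comp hp f g hC' hC]

lemma condEnt_pair_le [Fintype α] [Fintype β] [Fintype γ] (hp : IsPMF p)
    (A : Ω → α) (B : Ω → β) (C : Ω → γ) :
    condEnt p (fun ω => (A ω, B ω)) C ≤ condEnt p A C + condEnt p B C := by
  have h := ent_submod hp A B C
  rw [ent_eq_of_ae_eq_comp hp (fun x => ((x.1, x.2.1), x.2.2)) (fun x => (x.1.1, x.1.2, x.2))
    (fun _ _ => rfl) (fun _ _ => rfl)] at h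
  simp only [condEnt]
  linarith

lemma condEnt_eq_sum_of_indep [Fintype α] [Fintype β] [Fintype γ] [Fintype δ] (hp : IsPMF p)
    {A : Ω → α} {B : Ω → β}
    (hind : ∀ a b, distOf p (fun ω => (A ω, B ω)) (a, b) = distOf p A a * distOf p B b)
    (F : α → β → γ) (G : β → δ) :
    condEnt p (fun ω => F (A ω) (B ω)) (fun ω => (A ω, G (B ω)))
      = ∑ a, distOf p A a * condEnt p (fun ω => F a (B ω)) (fun ω => G (B ω)) := by
  have hFG := ent_pair_eq_add_sum hp A (fun ω => (F (A ω) (B ω), G (B ω)))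
    (fun a ω => (F a (B ω), G (B ω))) (distOf_pair_comp_of_indep hind fun a b => (F a b, G b))
  have hG := ent_pair_eq_add_sum hp A (fun ω => G (B ω)) (fun _ ω => G (B ω))
    (distOf_pair_comp_of_indep hind fun _ b => G b)
  have hswap : ent p (fun ω => (F (A ω) (B ω), A ω, G (B ω)))
      = ent p (fun ω => (A ω, F (A ω) (B ω), G (B ω))) :=
    ent_eq_of_ae_eq_comp hp (fun x => (x.2.1, x.1, x.2.2)) (fun x => (x.2.1, x.1, x.2.2))
      (fun _ _ => rfl) (fun _ _ => rfl)
  simp only [condEnt, hswap, hFG, hG, mul_sub, sum_sub_distrib]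
  ring

lemma mi_le_ent_right [Fintype α] [Fintype β] (hp : IsPMF p) (A : Ω → α) (B : Ω → β) :
    mi p A B ≤ ent p B := by
  have := ent_le_pair hp B A
  rw [mi, ent_pair_comm hp]
  linarith

lemma mi_eq_ent_sub_condEnt [Fintype α] [Fintype β] (hp : IsPMF p) (A : Ω → α) (B : Ω → β) :
    mi p A B = ent p B - condEnt p B A := by
  rw [mi, condEnt, ent_pair_comm hp]
  ring

lemma cmi_le_ent [Fintype α] [Fintype β] [Fintype γ] (hp : IsPMF p)
    (A : Ω → α) (B : Ω → β) (C : Ω → γ) : cmi p A B C ≤ ent p A := by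
  have := ent_pair_le hp A C
  have := ent_le_pair hp A fun ω => (B ω, C ω)
  rw [cmi]
  linarith

lemma cmi_eq_of_ae_eq_pair [Fintype α] [Fintype β] [Fintype γ] [Fintype δ] (hp : IsPMF p)
    {X : Ω → α} {Y : Ω → β × δ} {Y₁ : Ω → β} {C : Ω → γ} (k : γ → δ)
    (hY : ∀ ω, p ω ≠ 0 → Y ω = (Y₁ ω, k (C ω))) :
    cmi p X Y C = cmi p X Y₁ C := by
  have hYC : ent p (fun ω => (Y ω, C ω)) = ent p (fun ω => (Y₁ ω, C ω)) :=
    ent_eq_of_ae_eq_comp hp (fun x => (x.1.1, x.2)) (fun x => ((x.1, k x.2), x.2))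
      (fun ω hω => by rw [hY ω hω]) (fun ω hω => by rw [hY ω hω])
  have hXYC : ent p (fun ω => (X ω, Y ω, C ω)) = ent p (fun ω => (X ω, Y₁ ω, C ω)) :=
    ent_eq_of_ae_eq_comp hp (fun x => (x.1, x.2.1.1, x.2.2))
      (fun x => (x.1, (x.2.1, k x.2.2), x.2.2))
      (fun ω hω => by rw [hY ω hω]) (fun ω hω => by rw [hY ω hω])
  rw [cmi, cmi, hYC, hXYC]

lemma cmi_add_le [AddGroup α] [Fintype α] [Nonempty α] [Fintype γ] (hp : IsPMF p)
    (X T : Ω → α) (C : Ω → γ) :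
    cmi p X (fun ω => X ω + T ω) C
      ≤ logb 2 (Fintype.card α) - condEnt p T (fun ω => (X ω, C ω)) := by
  have h₁ := ent_pair_le hp (fun ω => X ω + T ω) C
  have h₂ := ent_le_logb_card hp fun ω => X ω + T ω
  have h₃ : ent p (fun ω => (X ω, X ω + T ω, C ω)) = ent p (fun ω => (T ω, X ω, C ω)) :=
    ent_eq_of_ae_eq_comp hp (fun x => (-x.1 + x.2.1, x.1, x.2.2))
      (fun x => (x.2.1, x.2.1 + x.1, x.2.2))
      (fun _ _ => by simp) (fun _ _ => rfl)
  rw [cmi, condEnt, h₃]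
  linarith

end Entropy

lemma sel_zero (w : Fin 2 × Fin 2) : sel w 0 = w.1 := by simp [sel]

lemma sel_one (w : Fin 2 × Fin 2) : sel w 1 = w.2 := by simp [sel]

lemma sum_exChan (w : Fin 2 × Fin 2) (x1 x2 : Fin 2) : ∑ y, exChan y w x1 x2 = 1 := by
  simp [exChan, Fintype.sum_prod_type, ite_and]

lemma eq_of_exChan_ne_zero {y w : Fin 2 × Fin 2} {x1 x2 : Fin 2} (h : exChan y w x1 x2 ≠ 0) :
    y = (x1 + sel w x2, x2) := by
  unfold exChan at h
  split_ifs at h with hy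
  · exact Prod.ext hy.1 hy.2
  · exact absurd rfl h

lemma fin_two_eq_of_ne_add_one {x b : Fin 2} (h : x ≠ b + 1) : x = b := by
  revert x b; decide

section ExampleChannel

variable {Ω 𝒰 𝒱 : Type*} [Fintype Ω] {p : Ω → ℝ}
  {U : Ω → 𝒰} {V : Ω → 𝒱} {X1 X2 : Ω → Fin 2} {W Y : Ω → Fin 2 × Fin 2}
  {c : 𝒰 → 𝒱 → Fin 2 → Fin 2 → Fin 2 × Fin 2 → ℝ}

lemma output_eq_of_distOf_eq (hp : IsPMF p)
    (hJ : ∀ u v x1 x2 w y,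
      distOf p (fun ω => (U ω, V ω, X1 ω, X2 ω, W ω, Y ω)) (u, v, x1, x2, w, y)
        = c u v x1 x2 w * exChan y w x1 x2)
    (ω : Ω) (hω : p ω ≠ 0) :
    Y ω = (X1 ω + sel (W ω) (X2 ω), X2 ω) := by
  have h := ((hp.1 ω).lt_of_ne' hω).trans_le
    (le_distOf hp (fun ω => (U ω, V ω, X1 ω, X2 ω, W ω, Y ω)) ω)
  rw [hJ] at h
  exact eq_of_exChan_ne_zero (right_ne_zero_of_mul h.ne')

lemma distOf_inputs_state_eq
    (hJ : ∀ u v x1 x2 w y,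
      distOf p (fun ω => (U ω, V ω, X1 ω, X2 ω, W ω, Y ω)) (u, v, x1, x2, w, y)
        = c u v x1 x2 w * exChan y w x1 x2)
    (u : 𝒰) (x1 x2 : Fin 2) (w : Fin 2 × Fin 2) (v : 𝒱) :
    distOf p (fun ω => ((U ω, X1 ω, X2 ω), (W ω, V ω))) ((u, x1, x2), (w, v)) = c u v x1 x2 w := by
  have hreorder (y) :
      distOf p (fun ω => (((U ω, X1 ω, X2 ω), (W ω, V ω)), Y ω)) (((u, x1, x2), (w, v)), y)
        = c u v x1 x2 w * exChan y w x1 x2 :=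
    (distOf_comp_of_injective (fun ω => (((U ω, X1 ω, X2 ω), (W ω, V ω)), Y ω))
      (f := fun z => (z.1.1.1, z.1.2.2, z.1.1.2.1, z.1.1.2.2, z.1.2.1, z.2))
      (Function.LeftInverse.injective
        (g := fun z : 𝒰 × 𝒱 × Fin 2 × Fin 2 × (Fin 2 × Fin 2) × (Fin 2 × Fin 2) =>
          (((z.1, z.2.2.1, z.2.2.2.1), (z.2.2.2.2.1, z.2.1)), z.2.2.2.2.2))
        fun _ => rfl) _).symm.trans (hJ u v x1 x2 w y)
  rw [distOf_fst_eq_sum _ Y]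
  simp only [hreorder, ← mul_sum, sum_exChan, mul_one]

lemma inputs_indep_state_and_distOf_state [Fintype 𝒰] [Fintype 𝒱] {q : Fin 2 → ℝ}
    {pU : 𝒰 → ℝ} {pX1 pX2 : Fin 2 → 𝒰 → ℝ} {pV : 𝒱 → Fin 2 × Fin 2 → ℝ}
    (hq : ∑ b, q b = 1) (hpU : ∑ u, pU u = 1) (hpX1 : ∀ u, ∑ x1, pX1 x1 u = 1)
    (hpX2 : ∀ u, ∑ x2, pX2 x2 u = 1) (hpV : ∀ w, ∑ v, pV v w = 1)
    (hJ : ∀ u v x1 x2 w y,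
      distOf p (fun ω => (U ω, V ω, X1 ω, X2 ω, W ω, Y ω)) (u, v, x1, x2, w, y)
        = pU u * pX1 x1 u * pX2 x2 u * (q w.1 * q w.2) * pV v w * exChan y w x1 x2) :
    (∀ s z, distOf p (fun ω => ((U ω, X1 ω, X2 ω), (W ω, V ω))) (s, z)
      = distOf p (fun ω => (U ω, X1 ω, X2 ω)) s * distOf p (fun ω => (W ω, V ω)) z) ∧
    ∀ w, distOf p W w = q w.1 * q w.2 := by
  have hSZ (s : 𝒰 × Fin 2 × Fin 2) (z : (Fin 2 × Fin 2) × 𝒱) :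
      distOf p (fun ω => ((U ω, X1 ω, X2 ω), (W ω, V ω))) (s, z)
        = (pU s.1 * pX1 s.2.1 s.1 * pX2 s.2.2 s.1) * (q z.1.1 * q z.1.2 * pV z.2 z.1) := by
    rw [distOf_inputs_state_eq hJ]
    ring
  have hf : ∑ s : 𝒰 × Fin 2 × Fin 2, pU s.1 * pX1 s.2.1 s.1 * pX2 s.2.2 s.1 = 1 := by
    simp [Fintype.sum_prod_type, mul_assoc, ← mul_sum, hpX1, hpX2, hpU]
  have hg : ∑ z : (Fin 2 × Fin 2) × 𝒱, q z.1.1 * q z.1.2 * pV z.2 z.1 = 1 := by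
    simp [Fintype.sum_prod_type, ← mul_sum, hpV, hq]
  refine ⟨fun s z => ?_, fun w => ?_⟩
  · rw [hSZ, distOf_fst_eq_of_eq_mul hSZ hg, distOf_snd_eq_of_eq_mul hSZ hf]
  · rw [distOf_fst_eq_sum W V]
    simp [distOf_snd_eq_of_eq_mul hSZ hf, ← mul_sum, hpV]

lemma condEnt_sel_nonpos [Fintype 𝒰] [Fintype 𝒱] (hp : IsPMF p)
    (hY : ∀ ω, p ω ≠ 0 → Y ω = (X1 ω + sel (W ω) (X2 ω), X2 ω))
    (h1 : 1 ≤ cmi p X1 Y (fun ω => (X2 ω, U ω, V ω))) :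
    condEnt p (fun ω => sel (W ω) (X2 ω)) (fun ω => ((U ω, X1 ω, X2 ω), V ω)) ≤ 0 := by
  rw [cmi_eq_of_ae_eq_pair hp Prod.fst hY] at h1
  have hle := cmi_add_le hp X1 (fun ω => sel (W ω) (X2 ω)) fun ω => (X2 ω, U ω, V ω)
  have hreorder : condEnt p (fun ω => sel (W ω) (X2 ω)) (fun ω => ((U ω, X1 ω, X2 ω), V ω))
      = condEnt p (fun ω => sel (W ω) (X2 ω)) (fun ω => (X1 ω, X2 ω, U ω, V ω)) :=
    condEnt_congr_right hp (fun c => (c.1.2.1, c.1.2.2, c.1.1, c.2))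
      (fun c => ((c.2.2.1, c.1, c.2.1), c.2.2.2)) (fun _ _ => rfl) (fun _ _ => rfl)
  simp only [Fintype.card_fin, Nat.cast_ofNat, logb_self_eq_one one_lt_two] at hle
  linarith

lemma condEnt_sel_eq_zero [Fintype 𝒰] [Fintype 𝒱] (hp : IsPMF p)
    (hind : ∀ s z, distOf p (fun ω => ((U ω, X1 ω, X2 ω), (W ω, V ω))) (s, z)
      = distOf p (fun ω => (U ω, X1 ω, X2 ω)) s * distOf p (fun ω => (W ω, V ω)) z)
    (hT : condEnt p (fun ω => sel (W ω) (X2 ω)) (fun ω => ((U ω, X1 ω, X2 ω), V ω)) ≤ 0)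
    {ω : Ω} (hω : p ω ≠ 0) :
    condEnt p (fun ω' => sel (W ω') (X2 ω)) V = 0 := by
  have hT_sum : condEnt p (fun ω => sel (W ω) (X2 ω)) (fun ω => ((U ω, X1 ω, X2 ω), V ω))
      = ∑ s, distOf p (fun ω => (U ω, X1 ω, X2 ω)) s * condEnt p (fun ω => sel (W ω) s.2.2) V :=
    condEnt_eq_sum_of_indep hp hind (fun s z => sel z.1 s.2.2) Prod.snd
  exact eq_zero_of_sum_distOf_mul_nonpos hp (X := fun ω => (U ω, X1 ω, X2 ω))
    (φ := fun s => condEnt p (fun ω => sel (W ω) s.2.2) V) (fun _ => condEnt_nonneg hp _ _)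
    (hT_sum.symm.trans_le hT) hω

lemma le_condEnt_state [Fintype 𝒱] {α : Type*} [Fintype α] (hp : IsPMF p) {A : Ω → α}
    {q : Fin 2 → ℝ} (hq : ∑ b, q b = 1) (hqH : ∑ b, -(q b * logb 2 (q b)) = 1 / 2)
    (hW : ∀ w, distOf p W w = q w.1 * q w.2) {R : ℝ} (h : 1 + R ≤ mi p A Y - mi p V W) :
    R ≤ condEnt p W V := by
  have hY : ent p Y ≤ 2 := (ent_le_logb_card hp Y).trans_eq (by
    simp only [Fintype.card_prod, Fintype.card_fin, Nat.cast_mul, Nat.cast_ofNat]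
    rw [logb_mul two_ne_zero two_ne_zero, logb_self_eq_one one_lt_two]
    norm_num)
  rw [mi_eq_ent_sub_condEnt hp V W, ent_eq_two_mul_of_distOf_eq hq hW, hqH] at h
  linarith [mi_le_ent_right hp A Y]

lemma condEnt_le_add_sel [Fintype 𝒱] (hp : IsPMF p) :
    condEnt p W V
      ≤ condEnt p (fun ω => sel (W ω) 0) V + condEnt p (fun ω => sel (W ω) 1) V := by
  simpa only [sel_zero, sel_one] using
    condEnt_pair_le hp (fun ω => (W ω).1) (fun ω => (W ω).2) V

end ExampleChannel

theorem stmt_3_general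
    {Ω 𝒰 𝒱 : Type*} [Fintype Ω] [Fintype 𝒰] [Fintype 𝒱]
    (q : Fin 2 → ℝ) (hq : IsPMF q)
    (hqH : ∑ b, -(q b * Real.logb 2 (q b)) = 1/2)
    (p : Ω → ℝ) (hp : IsPMF p)
    (U : Ω → 𝒰) (V : Ω → 𝒱) (X1 : Ω → Fin 2) (X2 : Ω → Fin 2)
    (W : Ω → Fin 2 × Fin 2) (Y : Ω → Fin 2 × Fin 2)
    (hfac : ∃ (pU : 𝒰 → ℝ) (pX1 : Fin 2 → 𝒰 → ℝ) (pX2 : Fin 2 → 𝒰 → ℝ)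
      (pV : 𝒱 → Fin 2 × Fin 2 → ℝ),
      IsPMF pU ∧
      (∀ u, (∀ x1, 0 ≤ pX1 x1 u) ∧ ∑ x1, pX1 x1 u = 1) ∧
      (∀ u, (∀ x2, 0 ≤ pX2 x2 u) ∧ ∑ x2, pX2 x2 u = 1) ∧
      (∀ w, (∀ v, 0 ≤ pV v w) ∧ ∑ v, pV v w = 1) ∧
      ∀ u v x1 x2 w y,
        distOf p (fun ω => (U ω, V ω, X1 ω, X2 ω, W ω, Y ω)) (u, v, x1, x2, w, y)
          = pU u * pX1 x1 u * pX2 x2 u * (q w.1 * q w.2) * pV v w * exChan y w x1 x2)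
    (R1 R2 : ℝ) (hR1 : R1 = 1) (hR2nn : 0 ≤ R2)
    (h1 : R1 ≤ cmi p X1 Y (fun ω => (X2 ω, U ω, V ω)))
    (h2 : R2 ≤ cmi p X2 Y (fun ω => (X1 ω, U ω, V ω)))
    (h4 : R1 + R2 ≤ mi p (fun ω => (X1 ω, X2 ω, V ω)) Y - mi p V W) :
    R2 = 0 := by
  obtain ⟨pU, pX1, pX2, pV, hpU, hpX1, hpX2, hpV, hJ⟩ := hfac
  obtain ⟨hind, hW⟩ := inputs_indep_state_and_distOf_state hq.2 hpU.2 (fun u => (hpX1 u).2)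
    (fun u => (hpX2 u).2) (fun w => (hpV w).2) hJ
  have hT := condEnt_sel_nonpos hp (output_eq_of_distOf_eq hp hJ) (hR1 ▸ h1)
  have hR2X2 : R2 ≤ ent p X2 := h2.trans (cmi_le_ent hp _ _ _)
  have hR2W : R2 ≤ condEnt p W V := le_condEnt_state hp hq.2 hqH hW (hR1 ▸ h4)
  refine le_antisymm (not_lt.1 fun hpos => ?_) hR2nn
  have hsel (b : Fin 2) : condEnt p (fun ω => sel (W ω) b) V = 0 := by
    obtain ⟨ω, hω, hb⟩ := exists_ne_of_ent_ne_zero hp (hpos.trans_le hR2X2).ne' (b + 1)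
    simpa only [fin_two_eq_of_ne_add_one hb] using condEnt_sel_eq_zero hp hind hT hω
  linarith [condEnt_le_add_sel (W := W) (V := V) hp, hsel 0, hsel 1]

/-- on the example channel, any point of the old inner bound with
`R1 = 1` has `R2 = 0`. -/
theorem stmt_3
    {Ω 𝒰 𝒱 : Type*} [Fintype Ω] [Fintype 𝒰] [Fintype 𝒱]
    (q : Fin 2 → ℝ) (hq : IsPMF q)
    (hqH : ∑ b, -(q b * Real.logb 2 (q b)) = 1/2)
    (p : Ω → ℝ) (hp : IsPMF p)
    (U : Ω → 𝒰) (V : Ω → 𝒱) (X1 : Ω → Fin 2) (X2 : Ω → Fin 2)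
    (W : Ω → Fin 2 × Fin 2) (Y : Ω → Fin 2 × Fin 2)
    (hfac : ∃ (pU : 𝒰 → ℝ) (pX1 : Fin 2 → 𝒰 → ℝ) (pX2 : Fin 2 → 𝒰 → ℝ)
      (pV : 𝒱 → Fin 2 × Fin 2 → ℝ),
      IsPMF pU ∧
      (∀ u, (∀ x1, 0 ≤ pX1 x1 u) ∧ ∑ x1, pX1 x1 u = 1) ∧
      (∀ u, (∀ x2, 0 ≤ pX2 x2 u) ∧ ∑ x2, pX2 x2 u = 1) ∧
      (∀ w, (∀ v, 0 ≤ pV v w) ∧ ∑ v, pV v w = 1) ∧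
      ∀ u v x1 x2 w y,
        distOf p (fun ω => (U ω, V ω, X1 ω, X2 ω, W ω, Y ω)) (u, v, x1, x2, w, y)
          = pU u * pX1 x1 u * pX2 x2 u * (q w.1 * q w.2) * pV v w * exChan y w x1 x2)
    (R1 R2 : ℝ) (hR1 : R1 = 1) (hR2nn : 0 ≤ R2)
    (h1 : R1 ≤ cmi p X1 Y (fun ω => (X2 ω, U ω, V ω)))
    (h2 : R2 ≤ cmi p X2 Y (fun ω => (X1 ω, U ω, V ω)))
    (h3 : R1 + R2 ≤ cmi p (fun ω => (X1 ω, X2 ω)) Y (fun ω => (U ω, V ω)))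
    (h4 : R1 + R2 ≤ mi p (fun ω => (X1 ω, X2 ω, V ω)) Y - mi p V W) :
    R2 = 0 :=
  stmt_3_general q hq hqH p hp U V X1 X2 W Y hfac R1 R2 hR1 hR2nn h1 h2 h4
end

section
/- Consider the example channel: 𝒳1 = 𝒳2 = {0,1}, state W = (W0,W1) where W0, W1 are i.i.d. binary random variables each of Shannon entropy 1/2 bit, and output Y = (Y1,Y2) with Y1 = X1 ⊕ W_{X2} and Y2 = X2. Let U = 0, V = 0, V1 = 0 (deterministic constants), V2 = W_{X2}, and let X1, X2 be i.i.d. Bernoulli(1/2) independent of (W0,W1). Then with R1 = 1, R2 = 1/2, R0 = R0⁽¹⁾ = 0, R0⁽²⁾ = 1/2, all of the following inequalities hold: R1+R0⁽¹⁾ ≤ I(X1;Y,V1,V2,V|X2,U); R2+R0⁽²⁾ ≤ I(X2;Y,V1,V2,V|X1,U); R1+R2+R0⁽¹⁾+R0⁽²⁾ ≤ I(X1,X2;Y,V1,V2,V|U); R0+R1+R2+R0⁽¹⁾+R0⁽²⁾ ≤ I(X1,X2;Y,V1,V2,V); R0⁽¹⁾ ≥ I(X1,W;V1|V,V2,Y);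 R0⁽²⁾ ≥ I(X2,W;V2|V,V1,Y); R0 ≥ I(W;V|V1,V2,Y); R0⁽¹⁾+R0⁽²⁾ ≥ I(X1,X2,W;V1,V2|V,Y); R0⁽¹⁾+R0 ≥ I(X1,W;V1,V|V2,Y); R0⁽²⁾+R0 ≥ I(X2,W;V2,V|V1,Y); and R0⁽¹⁾+R0⁽²⁾+R0 ≥ I(X1,X2,W;V1,V2,V|Y). In other words, the rate pair (1, 1/2) lies in the new inner bound for this channel. -/
attribute [local instance] Classical.propDecidable

/-- Sample space for the concrete example: `(x1, x2, w0, w1)`. -/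
abbrev Ω4 : Type := Fin 2 × Fin 2 × Fin 2 × Fin 2

/-- `X1, X2` i.i.d. Bernoulli(1/2), independent of `(W0, W1) ∼ q ⊗ q`. -/
noncomputable def p4 (q : Fin 2 → ℝ) : Ω4 → ℝ :=
  fun z => (1/4 : ℝ) * (q z.2.2.1 * q z.2.2.2)

def X1r : Ω4 → Fin 2 := fun z => z.1
def X2r : Ω4 → Fin 2 := fun z => z.2.1
def Wr : Ω4 → Fin 2 × Fin 2 := fun z => (z.2.2.1, z.2.2.2)
/-- `V2 = W_{X2}`. -/
def V2r : Ω4 → Fin 2 := fun z => sel (Wr z) (X2r z)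
/-- `Y = (X1 ⊕ W_{X2}, X2)`. -/
def Yr : Ω4 → Fin 2 × Fin 2 := fun z => (X1r z + V2r z, X2r z)

/-!
`X1`, `X2` are fair bits and `V2 = W_{X2}` is independent of `(X1, X2)` with law `q`, so that
`H(X1, X2, V2) = 5/2` and `H(X1, X2, W) = 3`; moreover `Y` is uniform. Every variable occurring in
the eleven quantities has the same fibres as one of a constant, `X1`, `X2`, `(X1, X2)`, `Y`,
`(X1, X2, V2)` or the whole sample point (for instance `(Y, V2)` recovers `X1 = Y1 - V2`, and
`(W, Y)` recovers `X1` and `X2`). Entropy only sees these fibres, so each quantity is an explicit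
combination of `0, 1, 1, 2, 2, 5/2, 3` and every inequality is arithmetic.
-/

section Entropy

variable {Ω α β : Type*} [Fintype Ω] [Fintype α] [Fintype β]

noncomputable def pmfEntropy (μ : α → ℝ) : ℝ := ∑ a, -(μ a * Real.logb 2 (μ a))

theorem ent_eq_pmfEntropy (p : Ω → ℝ) (X : Ω → α) : ent p X = pmfEntropy (distOf p X) := rfl

theorem distOf_id (p : Ω → ℝ) : distOf p id = p := by
  funext ω
  simp [distOf]

theorem sum_prod_mul_eq_one (μ : α → ℝ) (ν : β → ℝ) (hμ : ∑ a, μ a = 1) (hν : ∑ b, ν b = 1) :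
    ∑ x : α × β, μ x.1 * ν x.2 = 1 := by
  simp only [Fintype.sum_prod_type, ← Finset.mul_sum, hν, mul_one, hμ]

theorem pmfEntropy_mul (μ : α → ℝ) (ν : β → ℝ) (hμ : ∑ a, μ a = 1) (hν : ∑ b, ν b = 1) :
    pmfEntropy (fun x : α × β => μ x.1 * ν x.2) = pmfEntropy μ + pmfEntropy ν := by
  have hlog : ∀ a b, μ a * ν b * Real.logb 2 (μ a * ν b)
      = μ a * Real.logb 2 (μ a) * ν b + ν b * Real.logb 2 (ν b) * μ a := by
    intro a b
    rcases eq_or_ne (μ a) 0 with ha | ha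
    · simp [ha]
    rcases eq_or_ne (ν b) 0 with hb | hb
    · simp [hb]
    rw [Real.logb_mul ha hb]
    ring
  simp only [pmfEntropy, Fintype.sum_prod_type, hlog, neg_add, Finset.sum_add_distrib,
    ← Finset.mul_sum, ← Finset.sum_mul, hμ, hν, Finset.sum_neg_distrib]
  ring

theorem sum_fair_bit : ∑ _ : Fin 2, (1 / 2 : ℝ) = 1 := by norm_num

theorem pmfEntropy_fair_bit : pmfEntropy (fun _ : Fin 2 => (1 / 2 : ℝ)) = 1 := by
  simp [pmfEntropy, Real.logb_inv]

theorem ent_eq_zero_of_subsingleton [Subsingleton α] (p : Ω → ℝ) (hp : ∑ ω, p ω = 1)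
    (X : Ω → α) : ent p X = 0 := by
  have hX : ∀ a, distOf p X a = 1 := fun a => by simp [distOf, Subsingleton.elim _ a, hp]
  simp [ent, hX]

theorem ent_comp_of_injective (p : Ω → ℝ) (X : Ω → α) {f : α → β} (hf : Function.Injective f) :
    ent p (fun ω => f (X ω)) = ent p X := by
  have hdist : ∀ a, distOf p (fun ω => f (X ω)) (f a) = distOf p X a := fun a => by
    simp [distOf, hf.eq_iff]
  have hzero : ∀ b ∉ Finset.univ.image f, distOf p (fun ω => f (X ω)) b = 0 := fun b hb => by
    refine Finset.sum_eq_zero fun ω _ => if_neg fun h => hb ?_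
    exact Finset.mem_image.2 ⟨X ω, Finset.mem_univ _, h⟩
  unfold ent
  rw [← Finset.sum_subset (Finset.subset_univ (Finset.univ.image f)) fun b _ hb => by
      simp [hzero b hb],
    Finset.sum_image fun a _ a' _ h => hf h]
  simp only [hdist]

/-- Both sides equal the entropy of `(X, Y)`, since each variable is a function of the other. -/
theorem ent_eq_of_fiber_iff {γ : Type*} [Fintype γ] (p : Ω → ℝ) {X : Ω → α} {Y : Ω → γ} {c : ℝ}
    (hY : ent p Y = c) (h : ∀ ω ω', X ω = X ω' ↔ Y ω = Y ω') : ent p X = c := by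
  rcases isEmpty_or_nonempty Ω with hΩ | ⟨⟨ω₀⟩⟩
  · rw [← hY]
    simp [ent, distOf]
  have hXY : ∀ ω, Function.extend Y X (fun _ => X ω₀) (Y ω) = X ω := fun ω =>
    Function.FactorsThrough.extend_apply (fun _ _ e => (h _ _).2 e) _ ω
  have hYX : ∀ ω, Function.extend X Y (fun _ => Y ω₀) (X ω) = Y ω := fun ω =>
    Function.FactorsThrough.extend_apply (fun _ _ e => (h _ _).1 e) _ ω
  have hpair_X := ent_comp_of_injective p X
    (f := fun a => (a, Function.extend X Y (fun _ => Y ω₀) a)) fun _ _ e => congrArg Prod.fst e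
  have hpair_Y := ent_comp_of_injective p Y
    (f := fun b => (Function.extend Y X (fun _ => X ω₀) b, b)) fun _ _ e => congrArg Prod.snd e
  simp only [hXY, hYX] at hpair_X hpair_Y
  rw [← hpair_X, hpair_Y, hY]

end Entropy

theorem IsPMF.apply_one_eq_one_sub {q : Fin 2 → ℝ} (hq : IsPMF q) : q 1 = 1 - q 0 := by
  have := hq.2
  rw [Fin.sum_univ_two] at this
  linarith

section Example

variable {q : Fin 2 → ℝ}

theorem p4_eq_mul : p4 q = fun z => 1 / 2 * (1 / 2 * (q z.2.2.1 * q z.2.2.2)) := by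
  funext z
  rw [p4]
  ring

theorem distOf_p4 {α : Type*} (X : Ω4 → α) (a : α) :
    distOf (p4 q) X a = ∑ x₁, ∑ x₂, ∑ w₀, ∑ w₁,
      if X (x₁, x₂, w₀, w₁) = a then 1 / 2 * (1 / 2 * (q w₀ * q w₁)) else 0 := by
  simp only [distOf, p4_eq_mul, Fintype.sum_prod_type]

variable (hq : IsPMF q)
include hq

theorem sum_p4 : ∑ z, p4 q z = 1 := by
  rw [p4_eq_mul]
  exact sum_prod_mul_eq_one (fun _ => 1 / 2)
    (fun y : Fin 2 × Fin 2 × Fin 2 => 1 / 2 * (q y.2.1 * q y.2.2)) sum_fair_bit <|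
    sum_prod_mul_eq_one (fun _ => 1 / 2) (fun w : Fin 2 × Fin 2 => q w.1 * q w.2) sum_fair_bit <|
      sum_prod_mul_eq_one q q hq.2 hq.2

theorem distOf_X1r : distOf (p4 q) X1r = fun _ => 1 / 2 := by
  funext a
  fin_cases a <;>
    simp +decide only [distOf_p4, Fin.sum_univ_two, X1r, Fin.zero_eta, Fin.mk_one, if_true,
      if_false, hq.apply_one_eq_one_sub] <;>
    ring

theorem distOf_X2r : distOf (p4 q) X2r = fun _ => 1 / 2 := by
  funext a
  fin_cases a <;>
    simp +decide only [distOf_p4, Fin.sum_univ_two, X2r, Fin.zero_eta, Fin.mk_one, if_true,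
      if_false, hq.apply_one_eq_one_sub] <;>
    ring

theorem distOf_X1r_X2r : distOf (p4 q) (fun z => (X1r z, X2r z)) = fun _ => 1 / 2 * (1 / 2) := by
  funext a
  fin_cases a <;>
    simp +decide only [distOf_p4, Fin.sum_univ_two, X1r, X2r, Prod.mk.injEq, Fin.zero_eta,
      Fin.mk_one, if_true, if_false, hq.apply_one_eq_one_sub] <;>
    ring

theorem distOf_Yr : distOf (p4 q) Yr = fun _ => 1 / 2 * (1 / 2) := by
  funext a
  fin_cases a <;>
    simp +decide only [distOf_p4, Fin.sum_univ_two, X1r, X2r, V2r, Wr, Yr, sel, Prod.mk.injEq,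
      Fin.zero_eta, Fin.mk_one, if_true, if_false, hq.apply_one_eq_one_sub] <;>
    ring

theorem distOf_X1r_X2r_V2r :
    distOf (p4 q) (fun z => (X1r z, X2r z, V2r z)) = fun x => 1 / 2 * (1 / 2 * q x.2.2) := by
  funext a
  fin_cases a <;>
    simp +decide only [distOf_p4, Fin.sum_univ_two, X1r, X2r, V2r, Wr, sel, Prod.mk.injEq,
      Fin.zero_eta, Fin.mk_one, if_true, if_false, hq.apply_one_eq_one_sub] <;>
    ring

theorem ent_X1r : ent (p4 q) X1r = 1 := by
  rw [ent_eq_pmfEntropy, distOf_X1r hq, pmfEntropy_fair_bit]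

theorem ent_X2r : ent (p4 q) X2r = 1 := by
  rw [ent_eq_pmfEntropy, distOf_X2r hq, pmfEntropy_fair_bit]

theorem ent_X1r_X2r : ent (p4 q) (fun z => (X1r z, X2r z)) = 2 := by
  rw [ent_eq_pmfEntropy, distOf_X1r_X2r hq, pmfEntropy_mul _ _ sum_fair_bit sum_fair_bit,
    pmfEntropy_fair_bit]
  norm_num

theorem ent_Yr : ent (p4 q) Yr = 2 := by
  rw [ent_eq_pmfEntropy, distOf_Yr hq, pmfEntropy_mul _ _ sum_fair_bit sum_fair_bit,
    pmfEntropy_fair_bit]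
  norm_num

variable (hqH : pmfEntropy q = 1 / 2)
include hqH

theorem ent_X1r_X2r_V2r : ent (p4 q) (fun z => (X1r z, X2r z, V2r z)) = 5 / 2 := by
  rw [ent_eq_pmfEntropy, distOf_X1r_X2r_V2r hq,
    pmfEntropy_mul (fun _ => 1 / 2) (fun y : Fin 2 × Fin 2 => 1 / 2 * q y.2) sum_fair_bit
      (sum_prod_mul_eq_one _ _ sum_fair_bit hq.2),
    pmfEntropy_mul (fun _ => 1 / 2) q sum_fair_bit hq.2, pmfEntropy_fair_bit, hqH]
  norm_num

theorem ent_p4_id : ent (p4 q) id = 3 := by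
  have hW := sum_prod_mul_eq_one q q hq.2 hq.2
  rw [ent_eq_pmfEntropy, distOf_id, p4_eq_mul,
    pmfEntropy_mul (fun _ => 1 / 2)
      (fun y : Fin 2 × Fin 2 × Fin 2 => 1 / 2 * (q y.2.1 * q y.2.2)) sum_fair_bit
      (sum_prod_mul_eq_one _ _ sum_fair_bit hW),
    pmfEntropy_mul (fun _ => 1 / 2) (fun w : Fin 2 × Fin 2 => q w.1 * q w.2) sum_fair_bit hW,
    pmfEntropy_mul q q hq.2 hq.2, pmfEntropy_fair_bit, hqH]
  norm_num

end Example

/-- on the example channel, with `U = V = V1 = 0`, `V2 = W_{X2}`,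
`X1, X2` i.i.d. Bernoulli(1/2) independent of the state, the rate point
`(R1, R2) = (1, 1/2)` with `R0 = R0⁽¹⁾ = 0`, `R0⁽²⁾ = 1/2` satisfies all the
inequalities of the new inner bound. -/
theorem stmt_4
    (q : Fin 2 → ℝ) (hq : IsPMF q)
    (hqH : ∑ b, -(q b * Real.logb 2 (q b)) = 1/2) :
    (1 : ℝ) + 0 ≤ cmi (p4 q) X1r (fun z => (Yr z, (0 : Fin 1), V2r z, (0 : Fin 1)))
        (fun z => (X2r z, (0 : Fin 1))) ∧
    (1/2 : ℝ) + 1/2 ≤ cmi (p4 q) X2r (fun z => (Yr z, (0 : Fin 1), V2r z, (0 : Fin 1)))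
        (fun z => (X1r z, (0 : Fin 1))) ∧
    (1 : ℝ) + 1/2 + 0 + 1/2 ≤ cmi (p4 q) (fun z => (X1r z, X2r z))
        (fun z => (Yr z, (0 : Fin 1), V2r z, (0 : Fin 1))) (fun _ => (0 : Fin 1)) ∧
    (0 : ℝ) + 1 + 1/2 + 0 + 1/2 ≤ mi (p4 q) (fun z => (X1r z, X2r z))
        (fun z => (Yr z, (0 : Fin 1), V2r z, (0 : Fin 1))) ∧
    (0 : ℝ) ≥ cmi (p4 q) (fun z => (X1r z, Wr z)) (fun _ => (0 : Fin 1))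
        (fun z => ((0 : Fin 1), V2r z, Yr z)) ∧
    (1/2 : ℝ) ≥ cmi (p4 q) (fun z => (X2r z, Wr z)) V2r
        (fun z => ((0 : Fin 1), (0 : Fin 1), Yr z)) ∧
    (0 : ℝ) ≥ cmi (p4 q) Wr (fun _ => (0 : Fin 1))
        (fun z => ((0 : Fin 1), V2r z, Yr z)) ∧
    (0 : ℝ) + 1/2 ≥ cmi (p4 q) (fun z => (X1r z, X2r z, Wr z))
        (fun z => ((0 : Fin 1), V2r z)) (fun z => ((0 : Fin 1), Yr z)) ∧
    (0 : ℝ) + 0 ≥ cmi (p4 q) (fun z => (X1r z, Wr z))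
        (fun _ => ((0 : Fin 1), (0 : Fin 1))) (fun z => (V2r z, Yr z)) ∧
    (1/2 : ℝ) + 0 ≥ cmi (p4 q) (fun z => (X2r z, Wr z))
        (fun z => (V2r z, (0 : Fin 1))) (fun z => ((0 : Fin 1), Yr z)) ∧
    (0 : ℝ) + 1/2 + 0 ≥ cmi (p4 q) (fun z => (X1r z, X2r z, Wr z))
        (fun z => ((0 : Fin 1), V2r z, (0 : Fin 1))) Yr := by
  have h0 := ent_eq_zero_of_subsingleton (p4 q) (sum_p4 hq) (fun _ => (0 : Fin 1))
  have h1 := ent_X1r hq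
  have h2 := ent_X2r hq
  have h12 := ent_X1r_X2r hq
  have hY := ent_Yr hq
  have hD := ent_X1r_X2r_V2r hq hqH
  have hΩ := ent_p4_id hq hqH
  refine ⟨?_, ?_, ?_, ?_, ?_, ?_, ?_, ?_, ?_, ?_, ?_⟩
  -- Under `Classical.propDecidable`, a decidability search that exceeds the default size bound
  -- silently falls back to the classical instance, on which `decide` is stuck.
  set_option synthInstance.maxSize 1024 in
  all_goals
    simp (disch := decide) only [cmi, mi, ent_eq_of_fiber_iff _ h0, ent_eq_of_fiber_iff _ h1,
      ent_eq_of_fiber_iff _ h2, ent_eq_of_fiber_iff _ h12, ent_eq_of_fiber_iff _ hY,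
      ent_eq_of_fiber_iff _ hD, ent_eq_of_fiber_iff _ hΩ]
    norm_num
end
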